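/- arXiv:2508.06212 — 3 statements merged into one kernel-verified Lean document; each statement's English description precedes it below -/
import Mathlib

section
/- Let G be a graph, S a set of nested minimal separations, (T, V) the induced tree-decomposition rooted at the unique node t_x containing a vertex x with x ∈ A \ B for all (A,B) ∈ S and x in exactly one bag. For distinct separations (A_i, B_i), (A_j, B_j) ∈ S with corresponding edges e_i, e_j of T, the edge e_i is a proper ancestor of e_j in T if and only if B_j \ A_j ⊊ B_i \ A_i. -/
open SimpleGraph

variable {V : Type*}

def IsSeparation (G : SimpleGraph V) (A B : Set V) : Prop :=
  A ∪ B = Set.univ ∧ (A \ B).Nonempty ∧ (B \ A).Nonempty ∧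
    ∀ u ∈ A \ B, ∀ v ∈ B \ A, ¬ G.Adj u v

def Nested (A B C D : Set V) : Prop :=
  (A ⊆ C ∧ D ⊆ B) ∨ (A ⊆ D ∧ C ⊆ B) ∨ (B ⊆ C ∧ D ⊆ A) ∨ (B ⊆ D ∧ C ⊆ A)

/-- `S` is a set of pairwise nested separations of `G`. -/
def NestedFamily (G : SimpleGraph V) (S : Set (Set V × Set V)) : Prop :=
  (∀ AB ∈ S, IsSeparation G AB.1 AB.2) ∧
  ∀ AB ∈ S, ∀ CD ∈ S, Nested AB.1 AB.2 CD.1 CD.2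

/-- A tree-decomposition of `G` with nodes indexed by `ι`. -/
structure TreeDecomp (G : SimpleGraph V) (ι : Type*) where
  tree : SimpleGraph ι
  isTree : tree.IsTree
  bag : ι → Set V
  bag_cover : ∀ v : V, ∃ t, v ∈ bag t
  bag_edge : ∀ u v : V, G.Adj u v → ∃ t, u ∈ bag t ∧ v ∈ bag t
  bag_connected : ∀ (v : V) (t₁ t₂ : ι), v ∈ bag t₁ → v ∈ bag t₂ →
    ∀ p : tree.Walk t₁ t₂, p.IsPath → ∀ t ∈ p.support, v ∈ bag t

/-- The union of the bags over the component of `T - t₁t₂` containing `t₁`. -/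
def TreeDecomp.side {G : SimpleGraph V} {ι : Type*} (td : TreeDecomp G ι)
    (t₁ t₂ : ι) : Set V :=
  ⋃ s ∈ {s : ι | ∀ p : td.tree.Walk s t₂, p.IsPath → t₁ ∈ p.support}, td.bag s

/-- The edge `t₁t₂` of the decomposition tree induces the separation `AB`
(in one of the two orientations). -/
def TreeDecomp.EdgeInduces {G : SimpleGraph V} {ι : Type*} (td : TreeDecomp G ι)
    (t₁ t₂ : ι) (AB : Set V × Set V) : Prop :=
  (AB.1 = td.side t₁ t₂ ∧ AB.2 = td.side t₂ t₁) ∨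
  (AB.1 = td.side t₂ t₁ ∧ AB.2 = td.side t₁ t₂)

/-- The tree-decomposition `td` is induced by the set `S` of separations:
the map sending each tree edge to its induced separation is a bijection onto `S`. -/
def TreeDecomp.InducedBy {G : SimpleGraph V} {ι : Type*} (td : TreeDecomp G ι)
    (S : Set (Set V × Set V)) : Prop :=
  (∀ AB ∈ S, ∃ t₁ t₂, td.tree.Adj t₁ t₂ ∧ td.EdgeInduces t₁ t₂ AB) ∧
  (∀ t₁ t₂ : ι, td.tree.Adj t₁ t₂ → ∃ AB ∈ S, td.EdgeInduces t₁ t₂ AB) ∧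
  (∀ t₁ t₂ s₁ s₂ : ι, ∀ AB ∈ S, td.tree.Adj t₁ t₂ → td.tree.Adj s₁ s₂ →
    td.EdgeInduces t₁ t₂ AB → td.EdgeInduces s₁ s₂ AB →
      (s₁ = t₁ ∧ s₂ = t₂) ∨ (s₁ = t₂ ∧ s₂ = t₁)) ∧
  (∀ t₁ t₂ : ι, ∀ AB ∈ S, ∀ CD ∈ S, td.tree.Adj t₁ t₂ →
    td.EdgeInduces t₁ t₂ AB → td.EdgeInduces t₁ t₂ CD → AB = CD ∨ AB = (CD.2, CD.1))

/-- ancestor relation in the decomposition tree rooted at `rt`. -/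
def TAnc {ι : Type*} (T : SimpleGraph ι) (rt u v : ι) : Prop :=
  ∀ p : T.Walk rt v, p.IsPath → u ∈ p.support

/-- the tree edge `e` is a proper ancestor of the tree edge `f`. -/
def EdgePAnc {ι : Type*} (T : SimpleGraph ι) (rt : ι) (e f : ι × ι) : Prop :=
  TAnc T rt e.1 f.1 ∧ TAnc T rt e.2 f.1 ∧ TAnc T rt e.1 f.2 ∧ TAnc T rt e.2 f.2 ∧
    ¬ (e.1 = f.1 ∧ e.2 = f.2) ∧ ¬ (e.1 = f.2 ∧ e.2 = f.1)

/-- `u` and `v` are adjacent in the torso at node `t`. -/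
def TreeDecomp.TorsoAdj {G : SimpleGraph V} {ι : Type*} (td : TreeDecomp G ι)
    (t : ι) (u v : V) : Prop :=
  u ≠ v ∧ u ∈ td.bag t ∧ v ∈ td.bag t ∧
    (G.Adj u v ∨ ∃ t', td.tree.Adj t t' ∧ u ∈ td.bag t' ∧ v ∈ td.bag t')

def IsMinimalSep (G : SimpleGraph V) (A B : Set V) : Prop :=
  IsSeparation G A B ∧ ∀ v ∈ A ∩ B,
    (∃ u ∈ A \ B, G.Adj v u) ∧ (∃ u ∈ B \ A, G.Adj v u)



section Tree
variable {ι : Type*} [DecidableEq ι] {T : SimpleGraph ι}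

noncomputable def tpath (hT : T.IsTree) (u v : ι) : T.Walk u v :=
  (hT.existsUnique_path u v).choose

lemma tpath_isPath (hT : T.IsTree) (u v : ι) : (tpath hT u v).IsPath :=
  (hT.existsUnique_path u v).choose_spec.1

lemma tpath_unique (hT : T.IsTree) {u v : ι} (p : T.Walk u v) (hp : p.IsPath) :
    p = tpath hT u v :=
  (hT.existsUnique_path u v).choose_spec.2 p hp

def Sd (T : SimpleGraph ι) (t₁ t₂ : ι) : Set ι :=
  {s : ι | ∀ p : T.Walk s t₂, p.IsPath → t₁ ∈ p.support}

lemma mem_Sd (hT : T.IsTree) {t₁ t₂ s : ι} :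
    s ∈ Sd T t₁ t₂ ↔ t₁ ∈ (tpath hT s t₂).support := by
  constructor
  · exact fun h => h _ (tpath_isPath hT s t₂)
  · intro h p hp
    rw [tpath_unique hT p hp]; exact h

lemma tpath_reverse (hT : T.IsTree) (u v : ι) :
    (tpath hT u v).reverse = tpath hT v u :=
  tpath_unique hT _ ((tpath_isPath hT u v).reverse)

lemma eq_of_mem_takeUntil_dropUntil {u v w z : ι} {p : T.Walk u v} (hp : p.IsPath)
    (h : w ∈ p.support) (ha : z ∈ (p.takeUntil w h).support)
    (hb : z ∈ (p.dropUntil w h).support) : z = w := by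
  have hs : p.support = (p.takeUntil w h).support ++ (p.dropUntil w h).support.tail := by
    conv_lhs => rw [← p.take_spec h]
    exact Walk.support_append _ _
  have hnd := hp.support_nodup
  rw [hs] at hnd
  have hdisj := List.disjoint_of_nodup_append hnd
  rw [Walk.support_eq_cons (p.dropUntil w h)] at hb
  rcases List.mem_cons.1 hb with h' | h'
  · exact h'
  · exact absurd (hdisj ha h') (fun _ => (hdisj ha h'))

lemma self_mem_Sd (t₁ t₂ : ι) : t₁ ∈ Sd T t₁ t₂ :=
  fun p _ => p.start_mem_support

lemma not_mem_Sd_both (hT : T.IsTree) {t₁ t₂ s : ι} (hadj : T.Adj t₁ t₂)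
    (h1 : s ∈ Sd T t₁ t₂) (h2 : s ∈ Sd T t₂ t₁) : False := by
  have hp := tpath_isPath hT s t₂
  have h1' := (mem_Sd hT).1 h1
  have htake : (tpath hT s t₂).takeUntil t₁ h1' = tpath hT s t₁ :=
    tpath_unique hT _ (hp.takeUntil h1')
  have h2' := (mem_Sd hT).1 h2
  rw [← htake] at h2'
  have hend : t₂ ∈ ((tpath hT s t₂).dropUntil t₁ h1').support := Walk.end_mem_support _
  have := eq_of_mem_takeUntil_dropUntil hp h1' h2' hend
  exact hadj.ne' this

lemma mem_Sd_or (hT : T.IsTree) {t₁ t₂ : ι} (hadj : T.Adj t₁ t₂) (s : ι) :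
    s ∈ Sd T t₁ t₂ ∨ s ∈ Sd T t₂ t₁ := by
  by_cases h : s ∈ Sd T t₁ t₂
  · left; exact h
  right
  rw [mem_Sd hT] at h ⊢
  by_contra h2
  have hq : ((tpath hT s t₁).concat hadj).IsPath := by
    rw [← Walk.isPath_reverse_iff, Walk.reverse_concat]
    rw [Walk.cons_isPath_iff]
    refine ⟨(tpath_isPath hT s t₁).reverse, ?_⟩
    rw [Walk.support_reverse, List.mem_reverse]
    exact h2
  have hu := tpath_unique hT _ hq
  have : t₁ ∈ ((tpath hT s t₁).concat hadj).support := by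
    rw [Walk.support_concat, List.mem_append]
    exact Or.inl (Walk.end_mem_support _)
  rw [hu] at this
  exact h this

lemma cross (hT : T.IsTree) {t₁ t₂ a b : ι} (hadj : T.Adj t₁ t₂)
    (ha : a ∈ Sd T t₁ t₂) (hb : b ∈ Sd T t₂ t₁) :
    t₁ ∈ (tpath hT a b).support ∧ t₂ ∈ (tpath hT a b).support := by
  have key : ∀ (u₁ u₂ c d : ι), T.Adj u₁ u₂ → c ∈ Sd T u₁ u₂ → d ∈ Sd T u₂ u₁ →
      u₂ ∈ (tpath hT c d).support := by
    intro u₁ u₂ c d huv hc hd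
    by_contra h2
    set p := tpath hT c d with hp
    set W := p.append (tpath hT d u₂) with hW
    have hbp : W.bypass.IsPath := W.bypass_isPath
    have hbu : W.bypass = tpath hT c u₂ := tpath_unique hT _ hbp
    have ht₁ : u₁ ∈ W.support := by
      have h1 := (mem_Sd hT).1 hc
      rw [← hbu] at h1
      exact W.support_bypass_subset h1
    rw [Walk.mem_support_append_iff] at ht₁
    rcases ht₁ with h1 | h1
    · have hdrop : (tpath hT c d).dropUntil u₁ h1 = tpath hT u₁ d :=
        tpath_unique hT _ ((tpath_isPath hT c d).dropUntil h1)
      have h2' := (mem_Sd hT).1 hd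
      rw [← tpath_reverse hT u₁ d, Walk.support_reverse, List.mem_reverse, ← hdrop] at h2'
      exact h2 (Walk.support_dropUntil_subset _ h1 h2')
    · have : d ∈ Sd T u₁ u₂ := (mem_Sd hT).2 h1
      exact not_mem_Sd_both hT huv this hd
  refine ⟨?_, key t₁ t₂ a b hadj ha hb⟩
  have := key t₂ t₁ b a hadj.symm hb ha
  rw [← tpath_reverse hT a b, Walk.support_reverse, List.mem_reverse] at this
  exact this

lemma Sd_convex (hT : T.IsTree) {t₁ t₂ a b w : ι} (hadj : T.Adj t₁ t₂)
    (ha : a ∈ Sd T t₁ t₂) (hb : b ∈ Sd T t₁ t₂)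
    (hw : w ∈ (tpath hT a b).support) : w ∈ Sd T t₁ t₂ := by
  rcases mem_Sd_or hT hadj w with h | h
  · exact h
  exfalso
  have h1 := cross hT hadj ha h
  have h2 := cross hT hadj.symm h hb
  have hp := tpath_isPath hT a b
  have htake : (tpath hT a b).takeUntil w hw = tpath hT a w :=
    tpath_unique hT _ (hp.takeUntil hw)
  have hdrop : (tpath hT a b).dropUntil w hw = tpath hT w b :=
    tpath_unique hT _ (hp.dropUntil hw)
  have e1 : t₁ = w := by
    apply eq_of_mem_takeUntil_dropUntil hp hw
    · rw [htake]; exact h1.1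
    · rw [hdrop]; exact h2.2
  have e2 : t₂ = w := by
    apply eq_of_mem_takeUntil_dropUntil hp hw
    · rw [htake]; exact h1.2
    · rw [hdrop]; exact h2.1
  exact hadj.ne (e1.trans e2.symm)

lemma tpath_adj_support (hT : T.IsTree) {a b : ι} (h : T.Adj a b) :
    (tpath hT a b).support = [a, b] := by
  have hp : (Walk.cons h Walk.nil).IsPath := by
    rw [Walk.cons_isPath_iff]
    simp [h.ne]
  rw [← tpath_unique hT _ hp]
  simp

lemma Sd_nested (hT : T.IsTree) {t₁ t₂ s₁ s₂ tx : ι} (he : T.Adj t₁ t₂)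
    (hf : T.Adj s₁ s₂)
    (htx1 : tx ∈ Sd T t₁ t₂) (htx2 : tx ∈ Sd T s₁ s₂)
    (hs2 : s₂ ∈ Sd T t₂ t₁) :
    Sd T s₂ s₁ ⊆ Sd T t₂ t₁ ∧ Sd T t₁ t₂ ⊆ Sd T s₁ s₂ := by
  constructor
  · intro u hu
    rcases mem_Sd_or hT he u with h | h
    · exfalso
      have hcr := cross hT hf htx2 hu
      have := Sd_convex hT he htx1 h hcr.2
      exact not_mem_Sd_both hT he this hs2
    · exact h
  · intro u hu
    rcases mem_Sd_or hT hf u with h | h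
    · exact h
    · exfalso
      have hcr := cross hT hf htx2 h
      have := Sd_convex hT he htx1 hu hcr.2
      exact not_mem_Sd_both hT he this hs2

lemma Sd_disjoint_case (hT : T.IsTree) {t₁ t₂ s₁ s₂ tx : ι} (he : T.Adj t₁ t₂)
    (hf : T.Adj s₁ s₂)
    (htx1 : tx ∈ Sd T t₁ t₂) (htx2 : tx ∈ Sd T s₁ s₂)
    (hs2 : s₂ ∈ Sd T t₁ t₂) (ht2 : t₂ ∈ Sd T s₁ s₂) :
    Sd T s₂ s₁ ⊆ Sd T t₁ t₂ := by
  intro u hu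
  rcases mem_Sd_or hT he u with h | h
  · exact h
  exfalso
  set p := tpath hT tx u with hpdef
  have hs2mem : s₂ ∈ p.support := (cross hT hf htx2 hu).2
  have ht2mem : t₂ ∈ p.support := (cross hT he htx1 h).2
  have hp := tpath_isPath hT tx u
  have htake : p.takeUntil s₂ hs2mem = tpath hT tx s₂ :=
    tpath_unique hT _ (hp.takeUntil hs2mem)
  have hdrop : p.dropUntil s₂ hs2mem = tpath hT s₂ u :=
    tpath_unique hT _ (hp.dropUntil hs2mem)
  have hsplit : t₂ ∈ (p.takeUntil s₂ hs2mem).support ∨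
      t₂ ∈ (p.dropUntil s₂ hs2mem).support := by
    have hspec := p.take_spec hs2mem
    rw [← hspec, Walk.mem_support_append_iff] at ht2mem
    exact ht2mem
  rcases hsplit with hcase | hcase
  · rw [htake] at hcase
    have : t₂ ∈ Sd T t₁ t₂ := Sd_convex hT he htx1 hs2 hcase
    exact not_mem_Sd_both hT he this (self_mem_Sd t₂ t₁)
  · rw [hdrop] at hcase
    have : t₂ ∈ Sd T s₂ s₁ := Sd_convex hT hf.symm (self_mem_Sd s₂ s₁) hu hcase
    exact not_mem_Sd_both hT hf ht2 this

end Tree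

section Sep
variable {V : Type*}

lemma minsep_determined {G : SimpleGraph V} {A B C D : Set V}
    (hA : IsMinimalSep G A B) (hC : IsMinimalSep G C D) (h : B \ A = D \ C) :
    A = C ∧ B = D := by
  have hAeq : ∀ (A B : Set V), A ∪ B = Set.univ → A = (B \ A)ᶜ := by
    intro A B hu
    ext v
    simp only [Set.mem_compl_iff, Set.mem_diff, not_and, not_not]
    constructor
    · exact fun hv _ => hv
    · intro hv
      by_cases hB : v ∈ B
      · exact hv hB
      · have : v ∈ A ∪ B := by rw [hu]; trivial
        rcases this with h' | h'
        · exact h'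
        · exact absurd h' hB
  have hAC : A = C := by
    rw [hAeq A B hA.1.1, hAeq C D hC.1.1, h]
  refine ⟨hAC, ?_⟩
  have key : ∀ A B : Set V, IsMinimalSep G A B →
      B = (B \ A) ∪ {v | v ∈ A ∧ ∃ u ∈ B \ A, G.Adj v u} := by
    intro A B hAB
    ext v
    constructor
    · intro hv
      by_cases hA' : v ∈ A
      · exact Or.inr ⟨hA', (hAB.2 v ⟨hA', hv⟩).2⟩
      · exact Or.inl ⟨hv, hA'⟩
    · rintro (⟨hv, _⟩ | ⟨hvA, u, hu, hadj⟩)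
      · exact hv
      · by_contra hvB
        exact hAB.1.2.2.2 v ⟨hvA, hvB⟩ u hu hadj
  rw [key A B hA, key C D hC, h, hAC]

end Sep

section Side
variable {V : Type*} {G : SimpleGraph V} {ι : Type*} [DecidableEq ι]

lemma side_eq (td : TreeDecomp G ι) (a b : ι) :
    td.side a b = ⋃ s ∈ Sd td.tree a b, td.bag s := rfl

lemma side_mono (td : TreeDecomp G ι) {a b c d : ι}
    (h : Sd td.tree a b ⊆ Sd td.tree c d) : td.side a b ⊆ td.side c d := by
  rw [side_eq, side_eq]
  exact Set.iUnion₂_mono' fun s hs => ⟨s, h hs, le_refl _⟩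

lemma mem_side (td : TreeDecomp G ι) {a b : ι} {x : V} :
    x ∈ td.side a b ↔ ∃ s ∈ Sd td.tree a b, x ∈ td.bag s := by
  rw [side_eq]; simp only [Set.mem_iUnion, exists_prop]

end Side

lemma edgePAnc_swap_left {ι : Type*} (T : SimpleGraph ι) (rt a b c d : ι) :
    EdgePAnc T rt (a, b) (c, d) ↔ EdgePAnc T rt (b, a) (c, d) := by
  unfold EdgePAnc; dsimp only; tauto

lemma edgePAnc_swap_right {ι : Type*} (T : SimpleGraph ι) (rt a b c d : ι) :
    EdgePAnc T rt (a, b) (c, d) ↔ EdgePAnc T rt (a, b) (d, c) := by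
  unfold EdgePAnc; dsimp only; tauto

section Main
variable {V : Type*} {G : SimpleGraph V} {ι : Type*} [DecidableEq ι]

lemma main_lemma (td : TreeDecomp G ι)
    {AB CD : Set V × Set V} {t₁ t₂ s₁ s₂ tx : ι}
    (hABmin : IsMinimalSep G AB.1 AB.2) (hCDmin : IsMinimalSep G CD.1 CD.2)
    (hne : AB ≠ CD)
    (he : td.tree.Adj t₁ t₂) (hf : td.tree.Adj s₁ s₂)
    (htx1 : tx ∈ Sd td.tree t₁ t₂) (htx2 : tx ∈ Sd td.tree s₁ s₂)
    (hA1 : AB.1 = td.side t₁ t₂) (hA2 : AB.2 = td.side t₂ t₁)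
    (hC1 : CD.1 = td.side s₁ s₂) (hC2 : CD.2 = td.side s₂ s₁) :
    EdgePAnc td.tree tx (t₁, t₂) (s₁, s₂) ↔ CD.2 \ CD.1 ⊂ AB.2 \ AB.1 := by
  set T := td.tree with hTdef
  have hT : T.IsTree := td.isTree
  have hedge : ∀ u₁ u₂ a b : ι, T.Adj u₁ u₂ → T.Adj a b → a ∈ Sd T u₁ u₂ →
      b ∈ Sd T u₂ u₁ → (u₁ = a ∧ u₂ = b) ∨ (u₁ = b ∧ u₂ = a) := by
    intro u₁ u₂ a b huv hab hA hB
    have h1 := (cross hT huv hA hB).1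
    have h2 := (cross hT huv hA hB).2
    rw [tpath_adj_support hT hab] at h1 h2
    simp only [List.mem_cons, List.mem_singleton, List.not_mem_nil, or_false] at h1 h2
    rcases h1 with h1 | h1 <;> rcases h2 with h2 | h2
    · exact absurd (h1.trans h2.symm) huv.ne
    · exact Or.inl ⟨h1, h2⟩
    · exact Or.inr ⟨h1, h2⟩
    · exact absurd (h1.trans h2.symm) huv.ne
  constructor
  · rintro ⟨a1, a2, a3, a4, hne1, hne2⟩
    have hs1 : s₁ ∈ Sd T t₂ t₁ := by
      rcases mem_Sd_or hT he s₁ with h | h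
      · exfalso
        have ht₂ : t₂ ∈ (tpath hT tx s₁).support := (mem_Sd hT).1 a2
        have : t₂ ∈ Sd T t₁ t₂ := Sd_convex hT he htx1 h ht₂
        exact not_mem_Sd_both hT he this (self_mem_Sd t₂ t₁)
      · exact h
    have hs2 : s₂ ∈ Sd T t₂ t₁ := by
      rcases mem_Sd_or hT he s₂ with h | h
      · exfalso
        have ht₂ : t₂ ∈ (tpath hT tx s₂).support := (mem_Sd hT).1 a4
        have : t₂ ∈ Sd T t₁ t₂ := Sd_convex hT he htx1 h ht₂
        exact not_mem_Sd_both hT he this (self_mem_Sd t₂ t₁)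
      · exact h
    obtain ⟨hsub1, hsub2⟩ := Sd_nested hT he hf htx1 htx2 hs2
    have hsubCD : CD.2 \ CD.1 ⊆ AB.2 \ AB.1 := by
      rw [hA1, hA2, hC1, hC2]
      exact Set.diff_subset_diff (side_mono td hsub1) (side_mono td hsub2)
    refine (ssubset_iff_subset_ne).2 ⟨hsubCD, ?_⟩
    intro heq
    obtain ⟨e1, e2⟩ := minsep_determined hCDmin hABmin heq
    exact hne (by rw [Prod.ext_iff]; exact ⟨e1.symm, e2.symm⟩)
  · intro hss
    have hne12 : ¬(t₁ = s₁ ∧ t₂ = s₂) := by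
      rintro ⟨rfl, rfl⟩
      exact hne (by rw [Prod.ext_iff]; exact ⟨hA1.trans hC1.symm, hA2.trans hC2.symm⟩)
    have hne21 : ¬(t₁ = s₂ ∧ t₂ = s₁) := by
      rintro ⟨rfl, rfl⟩
      exact not_mem_Sd_both hT he htx1 htx2
    rcases mem_Sd_or hT he s₁ with hS1 | hS1 <;> rcases mem_Sd_or hT he s₂ with hS2 | hS2
    · -- case B : both on the near side
      exfalso
      rcases mem_Sd_or hT hf t₁ with hT1 | hT1 <;> rcases mem_Sd_or hT hf t₂ with hT2 | hT2
      · -- t₁, t₂ ∈ Sd s₁ s₂ : disjoint subtrees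
        have hsub : Sd T s₂ s₁ ⊆ Sd T t₁ t₂ :=
          Sd_disjoint_case hT he hf htx1 htx2 hS2 hT2
        obtain ⟨v, hv⟩ := hCDmin.1.2.2.1
        have hv2 : v ∈ AB.2 \ AB.1 := hss.subset hv
        have : v ∈ AB.1 := by
          rw [hA1]
          have : v ∈ CD.2 := hv.1
          rw [hC2] at this
          exact side_mono td hsub this
        exact hv2.2 this
      · -- t₁ near, t₂ far for f : mixed, edge equality
        rcases hedge s₁ s₂ t₁ t₂ hf he hT1 hT2 with ⟨h1, h2⟩ | ⟨h1, h2⟩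
        · exact hne12 ⟨h1.symm, h2.symm⟩
        · exact hne21 ⟨h2.symm, h1.symm⟩
      · rcases hedge s₁ s₂ t₂ t₁ hf he.symm hT2 hT1 with ⟨h1, h2⟩ | ⟨h1, h2⟩
        · exact hne21 ⟨h2.symm, h1.symm⟩
        · exact hne12 ⟨h1.symm, h2.symm⟩
      · -- t₁, t₂ ∈ Sd s₂ s₁ : f is ancestor of e, contradiction with ⊂
        obtain ⟨hsub1, hsub2⟩ := Sd_nested hT hf he htx2 htx1 hT2
        have : AB.2 \ AB.1 ⊆ CD.2 \ CD.1 := by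
          rw [hA1, hA2, hC1, hC2]
          exact Set.diff_subset_diff (side_mono td hsub1) (side_mono td hsub2)
        exact hss.ne (Set.Subset.antisymm hss.subset this)
    · exfalso
      rcases hedge t₁ t₂ s₁ s₂ he hf hS1 hS2 with ⟨h1, h2⟩ | ⟨h1, h2⟩
      · exact hne12 ⟨h1, h2⟩
      · exact hne21 ⟨h1, h2⟩
    · exfalso
      rcases hedge t₁ t₂ s₂ s₁ he hf.symm hS2 hS1 with ⟨h1, h2⟩ | ⟨h1, h2⟩
      · exact hne21 ⟨h1, h2⟩
      · exact hne12 ⟨h1, h2⟩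
    · -- case A : both on the far side; e is an ancestor of f
      refine ⟨?_, ?_, ?_, ?_, hne12, hne21⟩
      · exact (mem_Sd hT).2 (cross hT he htx1 hS1).1
      · exact (mem_Sd hT).2 (cross hT he htx1 hS1).2
      · exact (mem_Sd hT).2 (cross hT he htx1 hS2).1
      · exact (mem_Sd hT).2 (cross hT he htx1 hS2).2

end Main

/-- Rooting the induced tree-decomposition at the unique node containing `x` (where
`x ∈ A \ B` for every separation in `S` and `x` lies in exactly one bag), the edge
inducing `(A_i, B_i)` is a proper ancestor of the edge inducing `(A_j, B_j)` iff
`B_j \ A_j ⊊ B_i \ A_i`. -/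
theorem edge_ancestor_iff_ssubset [Fintype V] (G : SimpleGraph V) {ι : Type*}
    [Fintype ι] (td : TreeDecomp G ι) (S : Set (Set V × Set V)) (x : V) (tx : ι)
    (hmin : ∀ AB ∈ S, IsMinimalSep G AB.1 AB.2)
    (hnested : ∀ AB ∈ S, ∀ CD ∈ S, Nested AB.1 AB.2 CD.1 CD.2)
    (hind : td.InducedBy S)
    (hx : ∀ AB ∈ S, x ∈ AB.1 \ AB.2)
    (hxt : x ∈ td.bag tx) (hxu : ∃! t, x ∈ td.bag t)
    (AB CD : Set V × Set V) (hABS : AB ∈ S) (hCDS : CD ∈ S) (hne : AB ≠ CD)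
    (t₁ t₂ s₁ s₂ : ι)
    (hAdj1 : td.tree.Adj t₁ t₂) (hAdj2 : td.tree.Adj s₁ s₂)
    (hInd1 : td.EdgeInduces t₁ t₂ AB) (hInd2 : td.EdgeInduces s₁ s₂ CD) :
    EdgePAnc td.tree tx (t₁, t₂) (s₁, s₂) ↔ CD.2 \ CD.1 ⊂ AB.2 \ AB.1 := by
  classical
  have hT := td.isTree
  have getSide : ∀ (a b : ι) (P : Set V × Set V), P ∈ S → P.1 = td.side a b →
      tx ∈ Sd td.tree a b := by
    intro a b P hPS h1
    have hxP := (hx P hPS).1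
    rw [h1, mem_side td] at hxP
    obtain ⟨s, hs, hxs⟩ := hxP
    exact hxu.unique hxs hxt ▸ hs
  have hABm := hmin AB hABS
  have hCDm := hmin CD hCDS
  rcases hInd1 with ⟨hA1, hA2⟩ | ⟨hA1, hA2⟩ <;> rcases hInd2 with ⟨hC1, hC2⟩ | ⟨hC1, hC2⟩
  · exact main_lemma td hABm hCDm hne hAdj1 hAdj2
      (getSide t₁ t₂ AB hABS hA1) (getSide s₁ s₂ CD hCDS hC1) hA1 hA2 hC1 hC2
  · rw [edgePAnc_swap_right]
    exact main_lemma td hABm hCDm hne hAdj1 hAdj2.symm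
      (getSide t₁ t₂ AB hABS hA1) (getSide s₂ s₁ CD hCDS hC1) hA1 hA2 hC1 hC2
  · rw [edgePAnc_swap_left]
    exact main_lemma td hABm hCDm hne hAdj1.symm hAdj2
      (getSide t₂ t₁ AB hABS hA1) (getSide s₁ s₂ CD hCDS hC1) hA1 hA2 hC1 hC2
  · rw [edgePAnc_swap_left, edgePAnc_swap_right]
    exact main_lemma td hABm hCDm hne hAdj1.symm hAdj2.symm
      (getSide t₂ t₁ AB hABS hA1) (getSide s₂ s₁ CD hCDS hC1) hA1 hA2 hC1 hC2
end

section
/- Let G be a graph, S a nested set of separations, (T, V) the induced tree-decomposition, and X the set of vertices appearing in exactly one bag. For every vertex y ∉ X and every node t ∈ V(T): y ∈ V_t if and only if there is an edge of T incident to t inducing a separation (A, B) ∈ S with y ∈ A ∩ B. -/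
open SimpleGraph

variable {V : Type*}

/-- In a connected graph, if every path from `s` to `t'` passes through `t` and every
path from `s'` to `t` passes through `t'`, with `t ≠ t'`, then every path from `s`
to `s'` passes through `t`. -/
lemma key_path_lemma {ι : Type*} {T : SimpleGraph ι} (hc : T.Connected)
    {s s' t t' : ι} (htt' : t ≠ t')
    (hs : ∀ p : T.Walk s t', p.IsPath → t ∈ p.support)
    (hs' : ∀ p : T.Walk s' t, p.IsPath → t' ∈ p.support)
    (p : T.Walk s s') (hp : p.IsPath) : t ∈ p.support := by
  classical
  by_contra ht
  obtain ⟨q0⟩ := hc s' t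
  set q := q0.bypass with hqdef
  have hq : q.IsPath := q0.bypass_isPath
  have ht'q : t' ∈ q.support := hs' q hq
  set r := q.takeUntil t' ht'q with hrdef
  have hr : r.IsPath := hq.takeUntil ht'q
  -- t ∉ r.support
  have htr : t ∉ r.support := by
    intro htr
    have hspec := q.take_spec ht'q
    have hnd : q.support.Nodup := hq.support_nodup
    have hsupp : q.support = r.support ++ (q.dropUntil t' ht'q).support.tail := by
      rw [← SimpleGraph.Walk.support_append, hspec]
    have htd : t ∈ (q.dropUntil t' ht'q).support.tail := by
      have h1 : t ∈ (q.dropUntil t' ht'q).support :=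
        (q.dropUntil t' ht'q).end_mem_support
      have h2 : (q.dropUntil t' ht'q).support =
          t' :: (q.dropUntil t' ht'q).support.tail :=
        (q.dropUntil t' ht'q).support_eq_cons
      rw [h2] at h1
      rcases List.mem_cons.mp h1 with h1 | h1
      · exact absurd h1 htt'
      · exact h1
    rw [hsupp] at hnd
    exact (List.disjoint_of_nodup_append hnd) htr htd
  -- walk from s to t' avoiding t
  set w := p.append r with hwdef
  have htw : t ∉ w.support := by
    intro h
    rw [SimpleGraph.Walk.support_append] at h
    rcases List.mem_append.mp h with h | h
    · exact ht h
    · exact htr (List.mem_of_mem_tail h)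
  have := hs w.bypass w.bypass_isPath
  exact htw (w.support_bypass_subset this)

/-- A vertex `y` lying in more than one bag lies in the bag of a node `t` iff some edge
of the decomposition tree incident to `t` induces a separation of `S` whose separator
contains `y`. -/
theorem multi_bag_charac [Fintype V] (G : SimpleGraph V) {ι : Type*} [Fintype ι]
    (td : TreeDecomp G ι) (S : Set (Set V × Set V))
    (hS : NestedFamily G S) (hind : td.InducedBy S)
    (y : V) (hy : ¬ ∃! t, y ∈ td.bag t) (t : ι) :
    y ∈ td.bag t ↔
      ∃ t', td.tree.Adj t t' ∧ ∃ AB ∈ S, td.EdgeInduces t t' AB ∧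
        y ∈ AB.1 ∩ AB.2 := by
  classical
  have hc : td.tree.Connected := td.isTree.isConnected
  constructor
  · intro hyt
    -- y lies in another bag
    have hex : ∃ t₂, y ∈ td.bag t₂ ∧ t₂ ≠ t := by
      by_contra h
      push_neg at h
      exact hy ⟨t, hyt, fun z hz => h z hz⟩
    obtain ⟨t₂, hyt₂, ht₂⟩ := hex
    obtain ⟨w0⟩ := hc t t₂
    have hp : w0.bypass.IsPath := w0.bypass_isPath
    cases hw : w0.bypass with
    | nil => exact absurd rfl ht₂.symm
    | @cons _ t' _ hadj q =>
      rw [hw] at hp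
      have hyt' : y ∈ td.bag t' := by
        apply td.bag_connected y t t₂ hyt hyt₂ (SimpleGraph.Walk.cons hadj q) hp t'
        simp [SimpleGraph.Walk.support_cons, q.start_mem_support]
      obtain ⟨AB, hABS, hE⟩ := hind.2.1 t t' hadj
      refine ⟨t', hadj, AB, hABS, hE, ?_⟩
      have h1 : y ∈ td.side t t' := by
        refine Set.mem_biUnion (show t ∈ _ from ?_) hyt
        intro p _
        exact p.start_mem_support
      have h2 : y ∈ td.side t' t := by
        refine Set.mem_biUnion (show t' ∈ _ from ?_) hyt'
        intro p _
        exact p.start_mem_support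
      rcases hE with ⟨hA, hB⟩ | ⟨hA, hB⟩
      · exact ⟨hA ▸ h1, hB ▸ h2⟩
      · exact ⟨hA ▸ h2, hB ▸ h1⟩
  · rintro ⟨t', hadj, AB, hABS, hE, hy1, hy2⟩
    have hside : y ∈ td.side t t' ∧ y ∈ td.side t' t := by
      rcases hE with ⟨hA, hB⟩ | ⟨hA, hB⟩
      · exact ⟨hA ▸ hy1, hB ▸ hy2⟩
      · exact ⟨hB ▸ hy2, hA ▸ hy1⟩
    obtain ⟨s, hs, hys⟩ := Set.mem_iUnion₂.mp hside.1
    obtain ⟨s', hs', hys'⟩ := Set.mem_iUnion₂.mp hside.2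
    obtain ⟨w0⟩ := hc s s'
    have hp : w0.bypass.IsPath := w0.bypass_isPath
    have htmem : t ∈ w0.bypass.support :=
      key_path_lemma hc hadj.ne hs hs' w0.bypass hp
    exact td.bag_connected y s s' hys hys' w0.bypass hp t htmem
end

section
/- Let G be a 2-connected graph with normal spanning tree T rooted at r, compatible numbering, and let (A, B) be a half-connected type-2 separation with separator {a, b}. If there exists a vertex γ in the open tree path T(a, b) whose left child ℓ' satisfies lwpt₂(ℓ') = γ, then there exists a type-1 separation (A', B') with separator {a'', γ} where a'' = lwpt(ℓ') is a proper ancestor of a, and (A', B') crosses (A, B). -/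
open SimpleGraph

variable {V : Type*}

/-- `u` lies on every path (hence the unique path) from root `r` to `v` in tree `T`:
`u` is an ancestor of `v`. -/
def Anc (T : SimpleGraph V) (r u v : V) : Prop :=
  ∀ p : T.Walk r v, p.IsPath → u ∈ p.support

/-- proper ancestor -/
def PAnc (T : SimpleGraph V) (r u v : V) : Prop :=
  Anc T r u v ∧ u ≠ v

/-- `T` is a normal spanning tree of `G` rooted at `r`. -/
def IsNormalSpanningTree (G T : SimpleGraph V) (r : V) : Prop :=
  T.IsTree ∧ T ≤ G ∧ ∀ u v : V, G.Adj u v → Anc T r u v ∨ Anc T r v u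

/-- `w` is a child of `v` in the rooted tree `(T, r)`. -/
def IsChild (T : SimpleGraph V) (r v w : V) : Prop :=
  T.Adj v w ∧ Anc T r v w

/-- the set of descendants of `v` (including `v`). -/
def Desc (T : SimpleGraph V) (r v : V) : Set V := {u | Anc T r v u}

/-- `L(v)`: proper ancestors of `v` adjacent in `G` to some descendant of `v`. -/
def Lset (G T : SimpleGraph V) (r v : V) : Set V :=
  {u | PAnc T r u v ∧ ∃ w, Anc T r v w ∧ G.Adj u w}

/-- `x` is the `k`-th lowpoint of `v`: the `k`-th lowest element of `L(v)`,
or `v` itself if `|L(v)| < k`. -/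
def IsKthLowpoint (G T : SimpleGraph V) (r : V) (k : ℕ) (v x : V) : Prop :=
  (x ∈ Lset G T r v ∧ {u ∈ Lset G T r v | PAnc T r u x}.ncard = k - 1) ∨
  ((Lset G T r v).ncard < k ∧ x = v)

/-- `x` is the highpoint of `v`: the highest element of `L(v) \ {parent v}`,
or `v` itself if that set is empty. -/
def IsHighpoint (G T : SimpleGraph V) (r : V) (v x : V) : Prop :=
  (x ∈ Lset G T r v ∧ ¬ IsChild T r x v ∧
    ∀ u ∈ Lset G T r v, ¬ IsChild T r u v → Anc T r u x) ∨
  ((∀ u ∈ Lset G T r v, IsChild T r u v) ∧ x = v)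

/-- a numbering of the vertices by `1, …, n`. -/
def IsNumbering [Fintype V] (num : V → ℕ) : Prop :=
  Function.Injective num ∧ ∀ v, num v ∈ Set.Icc 1 (Fintype.card V)

/-- The numbering `num` is compatible with the normal spanning tree `(T, r)`,
where `lwpt1 v` and `lwpt2 v` are the first and second lowpoints of `v`. -/
def CompatibleNumbering [Fintype V] (G T : SimpleGraph V) (r : V)
    (num : V → ℕ) (lwpt1 lwpt2 : V → V) : Prop :=
  IsNumbering num ∧
  (∀ v : V, num '' Desc T r v = Set.Icc (num v) (num v + (Desc T r v).ncard - 1)) ∧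
  (∀ v, IsKthLowpoint G T r 1 v (lwpt1 v)) ∧
  (∀ v, IsKthLowpoint G T r 2 v (lwpt2 v)) ∧
  (∀ p j k : V, IsChild T r p j → IsChild T r p k → num j < num k →
    num (lwpt1 k) < num (lwpt1 j) ∨
      (lwpt1 j = lwpt1 k ∧ num (lwpt2 j) ≤ num (lwpt2 k)))

/-- `w` is the left child of `v`: its largest-numbered child. -/
def IsLeftChild (T : SimpleGraph V) (r : V) (num : V → ℕ) (v w : V) : Prop :=
  IsChild T r v w ∧ ∀ u, IsChild T r v u → num u ≤ num w

/-- `w` is a leftmost descendant of `v`. -/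
def LeftmostDesc (T : SimpleGraph V) (r : V) (num : V → ℕ) (v w : V) : Prop :=
  Relation.ReflTransGen (IsLeftChild T r num) v w

/-- `T[a,b]` is a leftmost path: `b` is a leftmost descendant of some child of `a`. -/
def IsLeftmostPath (T : SimpleGraph V) (r : V) (num : V → ℕ) (a b : V) : Prop :=
  ∃ a', IsChild T r a a' ∧ LeftmostDesc T r num a' b

/-- a back-edge `(x, y)` with `x` a descendant of `y`. -/
def IsBackEdge (G T : SimpleGraph V) (r : V) (x y : V) : Prop :=
  G.Adj x y ∧ ¬ T.Adj x y ∧ PAnc T r y x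

/-- `T[a,b]` is stable. -/
def Stable (G T : SimpleGraph V) (r : V) (num : V → ℕ) (a b : V) : Prop :=
  ∃ a', IsChild T r a a' ∧ LeftmostDesc T r num a' b ∧
    ∀ x y, IsBackEdge G T r x y → num a' ≤ num x → num x < num b → num a ≤ num y

/-- a 2-separation. -/
def IsSeparation2 (G : SimpleGraph V) (A B : Set V) : Prop :=
  IsSeparation G A B ∧ (A ∩ B).ncard = 2

/-- a totally-nested 2-separation. -/
def TotallyNested2 (G : SimpleGraph V) (A B : Set V) : Prop :=
  IsSeparation2 G A B ∧ ∀ C D : Set V, IsSeparation2 G C D → Nested A B C D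

/-- a half-connected separation. -/
def HalfConnected (G : SimpleGraph V) (A B : Set V) : Prop :=
  (G.induce (A \ B)).Connected ∨ (G.induce (B \ A)).Connected

/-- the open tree path `T(a,b)`. -/
def Topen (T : SimpleGraph V) (r a b : V) : Set V :=
  {u | PAnc T r a u ∧ PAnc T r u b}

/-- type-2 separations. -/
def IsType2Sep (G T : SimpleGraph V) (r : V) (A B : Set V) : Prop :=
  IsSeparation2 G A B ∧ ∃ a b : V, A ∩ B = {a, b} ∧ r ≠ a ∧ r ≠ b ∧
    (Topen T r a b).Nonempty ∧
    ((r ∈ A \ B ∧ Topen T r a b ⊆ B \ A) ∨ (r ∈ B \ A ∧ Topen T r a b ⊆ A \ B))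

/-- type-1 separations. -/
def IsType1Sep (G T : SimpleGraph V) (r : V) (A B : Set V) : Prop :=
  IsSeparation2 G A B ∧ ¬ IsType2Sep G T r A B

/-- 2-connectivity: more than two vertices and no cutvertex. -/
def TwoConnected [Fintype V] (G : SimpleGraph V) : Prop :=
  2 < Fintype.card V ∧ ∀ v : V, (G.induce {u | u ≠ v}).Connected

/-- `(A,B)` separates `u` and `v`. -/
def SepSeparates (A B : Set V) (u v : V) : Prop :=
  (u ∈ A \ B ∧ v ∈ B \ A) ∨ (u ∈ B \ A ∧ v ∈ A \ B)

/-- `m` is the number of the smallest-numbered neighbour of `v`. -/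
def IsNmin (G : SimpleGraph V) (num : V → ℕ) (v : V) (m : ℕ) : Prop :=
  (∃ u, G.Adj v u ∧ num u = m) ∧ ∀ u, G.Adj v u → m ≤ num u

/-- `w` is the second-largest child of `v`. -/
def IsSecondLargestChild (T : SimpleGraph V) (r : V) (num : V → ℕ) (v w : V) : Prop :=
  IsChild T r v w ∧ ({u | IsChild T r v u ∧ num w < num u}).ncard = 1

/-- `m = witn(v)`. -/
def IsWitn (G T : SimpleGraph V) (r : V) (num : V → ℕ) (lwpt1 : V → V)
    (v : V) (m : ℕ) : Prop :=
  (∃ w, IsSecondLargestChild T r num v w ∧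
    ∃ nm, IsNmin G num v nm ∧ m = min nm (num (lwpt1 w))) ∨
  ((¬ ∃ w, IsSecondLargestChild T r num v w) ∧ IsNmin G num v m)

/-- `S` is an interval of `X` with respect to the numbering. -/
def IsIntervalIn (num : V → ℕ) (X S : Set V) : Prop :=
  S ⊆ X ∧ ∀ x ∈ S, ∀ z ∈ S, ∀ y ∈ X, num x ≤ num y → num y ≤ num z → y ∈ S

/-- `S` is a cyclic interval of `X`. -/
def IsCyclicIntervalIn (num : V → ℕ) (X S : Set V) : Prop :=
  IsIntervalIn num X S ∨ IsIntervalIn num X (X \ S)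

section Helpers

open SimpleGraph.Walk

variable [DecidableEq V] {T : SimpleGraph V} {r : V}

/-- The unique path from `r` to `v` in a tree. -/
noncomputable def thePath (hT : T.IsTree) (r v : V) : T.Walk r v :=
  (hT.existsUnique_path r v).choose

lemma thePath_isPath (hT : T.IsTree) (r v : V) : (thePath hT r v).IsPath :=
  (hT.existsUnique_path r v).choose_spec.1

lemma thePath_unique (hT : T.IsTree) {r v : V} (p : T.Walk r v) (hp : p.IsPath) :
    p = thePath hT r v :=
  (hT.existsUnique_path r v).choose_spec.2 p hp

lemma anc_iff (hT : T.IsTree) {r u v : V} :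
    Anc T r u v ↔ u ∈ (thePath hT r v).support := by
  constructor
  · exact fun h => h _ (thePath_isPath hT r v)
  · intro h p hp
    rw [thePath_unique hT p hp]; exact h

lemma anc_refl (hT : T.IsTree) (r v : V) : Anc T r v v :=
  fun p _ => p.end_mem_support

lemma anc_root (hT : T.IsTree) {r u : V} (h : Anc T r u r) : u = r := by
  have := h Walk.nil Walk.IsPath.nil
  simpa using this

lemma takeUntil_eq (hT : T.IsTree) {r u v : V} (h : u ∈ (thePath hT r v).support) :
    (thePath hT r v).takeUntil u h = thePath hT r u :=
  thePath_unique hT _ ((thePath_isPath hT r v).takeUntil h)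

lemma anc_trans (hT : T.IsTree) {r u v w : V} (h1 : Anc T r u v) (h2 : Anc T r v w) :
    Anc T r u w := by
  rw [anc_iff hT] at h1 h2 ⊢
  rw [← takeUntil_eq hT h2] at h1
  exact support_takeUntil_subset _ h2 h1

lemma anc_antisymm (hT : T.IsTree) {r u v : V} (h1 : Anc T r u v) (h2 : Anc T r v u) :
    u = v := by
  by_contra hne
  rw [anc_iff hT] at h1 h2
  rw [← takeUntil_eq hT h1] at h2
  have hnd := (thePath_isPath hT r v).support_nodup
  rw [← take_spec (thePath hT r v) h1, support_append, List.nodup_append] at hnd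
  refine hnd.2.2 v h2 v ?_ rfl
  have hmem : v ∈ ((thePath hT r v).dropUntil u h1).support := end_mem_support _
  rw [support_eq_cons ((thePath hT r v).dropUntil u h1), List.mem_cons] at hmem
  rcases hmem with h | h
  · exact absurd h.symm hne
  · exact h

lemma anc_comparable (hT : T.IsTree) {r u w v : V} (hu : Anc T r u v) (hw : Anc T r w v) :
    Anc T r u w ∨ Anc T r w u := by
  rw [anc_iff hT] at hu hw
  rw [← take_spec (thePath hT r v) hw, mem_support_append_iff] at hu
  rcases hu with hu | hu
  · left
    rw [anc_iff hT, ← takeUntil_eq hT hw]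
    exact hu
  · right
    have hdp : ((thePath hT r v).dropUntil w hw).IsPath := (thePath_isPath hT r v).dropUntil hw
    set d := (thePath hT r v).dropUntil w hw with hd
    have hqp : (d.takeUntil u hu).IsPath := hdp.takeUntil hu
    set q := d.takeUntil u hu with hq
    have hnd := (thePath_isPath hT r v).support_nodup
    rw [← take_spec (thePath hT r v) hw, support_append, List.nodup_append] at hnd
    have hpath : (((thePath hT r v).takeUntil w hw).append q).IsPath := by
      rw [isPath_def, support_append, List.nodup_append]
      refine ⟨((thePath_isPath hT r v).takeUntil hw).support_nodup, hqp.support_nodup.tail, ?_⟩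
      intro z hz1 z' hz2 hzz; subst hzz
      have hzq : z ∈ q.support := List.mem_of_mem_tail hz2
      have hzw : z ≠ w := by
        intro h; subst h
        have := hqp.support_nodup
        rw [support_eq_cons q, List.nodup_cons] at this
        exact this.1 hz2
      have hzd : z ∈ d.support := support_takeUntil_subset _ hu hzq
      rw [support_eq_cons d, List.mem_cons] at hzd
      rcases hzd with h | h
      · exact hzw h
      · exact hnd.2.2 z hz1 z h rfl
    have : w ∈ (((thePath hT r v).takeUntil w hw).append q).support := by
      rw [mem_support_append_iff]; exact Or.inl (end_mem_support _)
    rw [anc_iff hT, ← thePath_unique hT _ hpath]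
    exact this

lemma child_support (hT : T.IsTree) {r v w : V} (hc : IsChild T r v w) :
    (thePath hT r w).support = (thePath hT r v).support ++ [w] := by
  have hnm : w ∉ (thePath hT r v).support := by
    intro hm
    exact hc.1.ne (anc_antisymm hT ((anc_iff hT).2 hm) hc.2).symm
  have hpath : ((thePath hT r v).concat hc.1).IsPath := by
    rw [isPath_def, support_concat, List.nodup_append]
    refine ⟨(thePath_isPath hT r v).support_nodup, List.nodup_singleton w, ?_⟩
    intro z hz1 z' hz2 hzz; subst hzz
    simp only [List.mem_singleton] at hz2
    subst hz2; exact hnm hz1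
  rw [← thePath_unique hT _ hpath, support_concat]

lemma anc_of_child (hT : T.IsTree) {r v w : V} (hc : IsChild T r v w) {u : V}
    (h : Anc T r u w) (hne : u ≠ w) : Anc T r u v := by
  rw [anc_iff hT, child_support hT hc] at h
  rcases List.mem_append.1 h with h | h
  · exact (anc_iff hT).2 h
  · simp at h; exact absurd h hne

lemma exists_child (hT : T.IsTree) {r x z : V} (h : PAnc T r x z) :
    ∃ w, IsChild T r x w ∧ Anc T r w z := by
  have hx : x ∈ (thePath hT r z).support := (anc_iff hT).1 h.1
  have hnn : ¬ ((thePath hT r z).dropUntil x hx).Nil := not_nil_of_ne h.2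
  obtain ⟨w, hadj, q, hq⟩ := not_nil_iff.1 hnn
  have hwd : w ∈ ((thePath hT r z).dropUntil x hx).support.tail := by
    rw [hq]; simp
  have hwz : Anc T r w z := by
    rw [anc_iff hT]
    exact support_dropUntil_subset (thePath hT r z) hx (List.mem_of_mem_tail hwd)
  have hnd := (thePath_isPath hT r z).support_nodup
  rw [← take_spec (thePath hT r z) hx, support_append, List.nodup_append] at hnd
  have hwx : w ∉ (thePath hT r x).support := by
    rw [← takeUntil_eq hT hx]
    intro hm
    exact hnd.2.2 w hm w hwd rfl
  have hpath : ((thePath hT r x).concat hadj).IsPath := by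
    rw [isPath_def, support_concat, List.nodup_append]
    refine ⟨(thePath_isPath hT r x).support_nodup, List.nodup_singleton w, ?_⟩
    intro z hz1 z' hz2 hzz; subst hzz
    simp only [List.mem_singleton] at hz2
    subst hz2; exact hwx hz1
  have hxw : Anc T r x w := by
    rw [anc_iff hT, ← thePath_unique hT _ hpath, support_concat]
    simp
  exact ⟨w, ⟨hadj, hxw⟩, hwz⟩

lemma walk_cross {W : Type*} {H : SimpleGraph W} {s t : W} (w : H.Walk s t)
    (P : W → Prop) (hs : P s) (ht : ¬ P t) :
    ∃ x y, H.Adj x y ∧ P x ∧ ¬ P y := by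
  induction w with
  | nil => exact absurd hs ht
  | cons h q ih =>
    rename_i s' u' t'
    by_cases hu : P u'
    · exact ih hu ht
    · exact ⟨s', u', h, hs, hu⟩

lemma sep_symm {G : SimpleGraph V} {A B : Set V} (h : IsSeparation G A B) :
    IsSeparation G B A :=
  ⟨Set.union_comm B A ▸ h.1, h.2.2.1, h.2.1, fun u hu v hv hadj => h.2.2.2 v hv u hu hadj.symm⟩

lemma walk_side {G : SimpleGraph V} {A B : Set V} (hsep : IsSeparation G A B)
    {a b : V} (hAB : A ∩ B = {a, b}) {s t : V} (w : G.Walk s t)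
    (hs : s ∈ A \ B) (hsup : ∀ v ∈ w.support, v ≠ a ∧ v ≠ b) : t ∈ A \ B := by
  induction w with
  | nil => exact hs
  | cons h q ih =>
    rename_i s' u' t'
    refine ih ?_ (fun v hv => hsup v (by rw [support_cons]; exact List.mem_cons_of_mem _ hv))
    have hu' : u' ∈ q.support := start_mem_support q
    have hne := hsup u' (by rw [support_cons]; exact List.mem_cons_of_mem _ hu')
    have huu : u' ∈ A ∪ B := by rw [hsep.1]; trivial
    have hnotAB : u' ∉ A ∩ B := by
      rw [hAB]; rintro (h1 | h1) <;> [exact hne.1 h1; exact hne.2 h1]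
    have hnotBA : u' ∉ B \ A := by
      intro hm
      exact hsep.2.2.2 s' hs u' hm h
    rcases huu with h1 | h1
    · exact ⟨h1, fun h2 => hnotAB ⟨h1, h2⟩⟩
    · exact absurd ⟨h1, fun h2 => hnotAB ⟨h2, h1⟩⟩ hnotBA

lemma nested_swap {A B C D : Set V} (h : Nested A B C D) : Nested B A C D := by
  rcases h with h | h | h | h
  · exact Or.inr (Or.inr (Or.inl h))
  · exact Or.inr (Or.inr (Or.inr h))
  · exact Or.inl h
  · exact Or.inr (Or.inl h)

lemma walkLe {T G : SimpleGraph V} (hle : T ≤ G) {s t : V} (p : T.Walk s t) :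
    ∃ q : G.Walk s t, q.support = p.support :=
  ⟨p.transfer G (fun _ he => edgeSet_mono hle (p.edges_subset_edgeSet he)),
    p.support_transfer _⟩

end Helpers

open SimpleGraph.Walk

lemma core_lemma [Fintype V] [DecidableEq V] (G T : SimpleGraph V) (r : V)
    (num : V → ℕ) (lwpt1 lwpt2 : V → V)
    (hG : TwoConnected G) (hT : IsNormalSpanningTree G T r)
    (hnum : CompatibleNumbering G T r num lwpt1 lwpt2)
    (A B : Set V) (a b : V)
    (hsepAB : IsSeparation G A B) (hAB : A ∩ B = {a, b})
    (hab : num a < num b) (hra : r ≠ a)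
    (hr : r ∈ A \ B) (hside : Topen T r a b ⊆ B \ A)
    (γ ℓ' : V) (hγ : γ ∈ Topen T r a b)
    (hl : IsLeftChild T r num γ ℓ') (hlw2 : lwpt2 ℓ' = γ) :
    ∃ A' B' : Set V, IsType1Sep G T r A' B' ∧ A' ∩ B' = {lwpt1 ℓ', γ} ∧
      PAnc T r (lwpt1 ℓ') a ∧ ¬ Nested A B A' B' := by
  obtain ⟨htree, hle, hnorm⟩ := hT
  obtain ⟨⟨hinj, -⟩, hdesc, hlw1s, hlw2s, hcond5⟩ := hnum
  have numle : ∀ {u v : V}, Anc T r u v → num u ≤ num v := by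
    intro u v h
    have : num v ∈ num '' Desc T r u := ⟨v, h, rfl⟩
    rw [hdesc u] at this
    exact this.1
  have numlt : ∀ {u v : V}, PAnc T r u v → num u < num v := by
    intro u v h
    exact lt_of_le_of_ne (numle h.1) (fun he => h.2 (hinj he))
  obtain ⟨hPaγ, hPγb⟩ := hγ
  have hchild : IsChild T r γ ℓ' := hl.1
  have hPγℓ : PAnc T r γ ℓ' := ⟨hchild.2, hchild.1.ne⟩
  have hnaℓ : num a < num ℓ' := lt_trans (numlt hPaγ) (numlt hPγℓ)
  have hPaℓ : PAnc T r a ℓ' := ⟨anc_trans htree hPaγ.1 hchild.2,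
    fun he => absurd (he ▸ hnaℓ) (lt_irrefl _)⟩
  -- γ is in L(ℓ')
  have hγL : γ ∈ Lset G T r ℓ' := ⟨hPγℓ, ℓ', anc_refl htree r ℓ', hle hchild.1⟩
  -- second lowpoint analysis
  have h2 := hlw2s ℓ'
  rw [hlw2] at h2
  rcases h2 with ⟨-, hS1⟩ | ⟨-, hγeq⟩
  swap
  · exact absurd hγeq hPγℓ.2
  -- first lowpoint analysis
  have h1 := hlw1s ℓ'
  rcases h1 with ⟨huL, h0⟩ | ⟨hlt, -⟩
  swap
  · exfalso
    have h00 : (Lset G T r ℓ').ncard = 0 := by omega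
    rw [Set.ncard_eq_zero (Set.toFinite _)] at h00
    rw [h00] at hγL; exact hγL
  have h0' : {w ∈ Lset G T r ℓ' | PAnc T r w (lwpt1 ℓ')} = ∅ := by
    rw [← Set.ncard_eq_zero (Set.toFinite _)]
    simpa using h0
  have hmin : ∀ y ∈ Lset G T r ℓ', Anc T r (lwpt1 ℓ') y := by
    intro y hy
    rcases anc_comparable htree huL.1.1 hy.1.1 with h | h
    · exact h
    · by_cases hey : y = lwpt1 ℓ'
      · rw [hey]; exact anc_refl htree r _
      · have : y ∈ {w ∈ Lset G T r ℓ' | PAnc T r w (lwpt1 ℓ')} := ⟨hy, h, hey⟩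
        rw [h0'] at this; exact this.elim
  have hS1' : ∃ w₀, {w ∈ Lset G T r ℓ' | PAnc T r w γ} = {w₀} := by
    rw [← Set.ncard_eq_one]; simpa using hS1
  obtain ⟨w₀, hw₀⟩ := hS1'
  have hw₀mem : w₀ ∈ {w ∈ Lset G T r ℓ' | PAnc T r w γ} := by rw [hw₀]; rfl
  have huγ : lwpt1 ℓ' ≠ γ := by
    intro he
    have h1 := hw₀mem.2
    have h2 := hmin w₀ hw₀mem.1
    rw [he] at h2
    exact h1.2 (anc_antisymm htree h1.1 h2)
  have hPuγ : PAnc T r (lwpt1 ℓ') γ :=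
    ⟨anc_of_child htree hchild huL.1.1 huL.1.2, huγ⟩
  have huS : lwpt1 ℓ' = w₀ := by
    have : lwpt1 ℓ' ∈ {w ∈ Lset G T r ℓ' | PAnc T r w γ} := ⟨huL, hPuγ⟩
    rw [hw₀] at this; exact this
  have hLset : Lset G T r ℓ' = {lwpt1 ℓ', γ} := by
    ext w
    constructor
    · intro hw
      by_cases hwγ : w = γ
      · exact Or.inr hwγ
      · left
        have hwanc : Anc T r w γ := anc_of_child htree hchild hw.1.1 hw.1.2
        have hwS : w ∈ {w ∈ Lset G T r ℓ' | PAnc T r w γ} := ⟨hw, hwanc, hwγ⟩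
        rw [hw₀] at hwS; rw [huS]; exact hwS
    · rintro (h | h) <;> subst h
      · exact huL
      · exact hγL
  -- child a₁ of a towards γ
  obtain ⟨a₁, ha₁c, ha₁γ⟩ := exists_child htree hPaγ
  have ha₁b : Anc T r a₁ b := anc_trans htree ha₁γ hPγb.1
  have ha₁T : a₁ ∈ Topen T r a b := by
    refine ⟨⟨ha₁c.2, ha₁c.1.ne⟩, ha₁b, ?_⟩
    intro he
    have h1 := numle ha₁γ
    have h2 := numlt hPγb
    rw [he] at h1; omega
  have ha₁BA : a₁ ∈ B \ A := hside ha₁T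
  have hγBA : γ ∈ B \ A := hside ⟨hPaγ, hPγb⟩
  have hγM : γ ∈ Desc T r a₁ := ha₁γ
  have hrM : r ∉ Desc T r a₁ := by
    intro h
    have h1 : a₁ = r := anc_root htree h
    rw [h1] at ha₁c
    exact hra (anc_root htree ha₁c.2).symm
  have hγa : γ ≠ a := fun he => hPaγ.2 he.symm
  -- a connectivity walk avoiding a
  obtain ⟨p⟩ := (hG.2 a).preconnected ⟨γ, hγa⟩ ⟨r, hra⟩
  obtain ⟨x', y', hadj', hxM, hyM⟩ :=
    walk_cross p (fun z => (z : V) ∈ Desc T r a₁) hγM hrM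
  obtain ⟨x, hxa⟩ := x'
  obtain ⟨y, hya⟩ := y'
  have hGadj : G.Adj x y := hadj'
  have hxa' : x ≠ a := hxa
  have hya' : y ≠ a := hya
  have hxM' : Anc T r a₁ x := hxM
  have hyM' : ¬ Anc T r a₁ y := hyM
  have hyPa : PAnc T r y a := by
    rcases hnorm x y hGadj with h | h
    · exact absurd (anc_trans htree hxM' h) hyM'
    · rcases anc_comparable htree h hxM' with h1 | h1
      · have hya₁ : y ≠ a₁ := fun he => hyM' (he ▸ anc_refl htree r a₁)
        exact ⟨anc_of_child htree ha₁c h1 hya₁, hya'⟩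
      · exact absurd h1 hyM'
  have hyAB : ∀ w : V, PAnc T r w a → w ∈ A \ B := by
    intro w hw
    obtain ⟨q, hq⟩ := walkLe hle (thePath htree r w)
    refine walk_side hsepAB hAB q hr ?_
    intro v hv
    rw [hq] at hv
    have hvw : Anc T r v w := (anc_iff htree).2 hv
    constructor
    · intro he; subst he
      exact hw.2 (anc_antisymm htree hw.1 hvw)
    · intro he; subst he
      have h1 : Anc T r v a := anc_trans htree hvw hw.1
      have h2 : Anc T r a v := anc_trans htree hPaγ.1 hPγb.1
      have h3 := anc_antisymm htree h1 h2
      rw [h3] at hab; exact lt_irrefl _ hab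
  have hyA : y ∈ A \ B := hyAB y hyPa
  have hbx : Anc T r b x := by
    have hxBA : x ∉ B \ A := fun hm => hsepAB.2.2.2 y hyA x hm hGadj.symm
    by_cases hxb : x = b
    · rw [hxb]; exact anc_refl htree r b
    · have hxA : x ∈ A \ B := by
        have hxU : x ∈ A ∪ B := by rw [hsepAB.1]; trivial
        have hxAB : x ∉ A ∩ B := by
          rw [hAB]; rintro (h | h); exacts [hxa' h, hxb h]
        rcases hxU with h | h
        · exact ⟨h, fun h2 => hxAB ⟨h, h2⟩⟩
        · exact absurd ⟨h, fun h2 => hxAB ⟨h2, h⟩⟩ hxBA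
      by_contra hbx
      have hxs : a₁ ∈ (thePath htree r x).support := (anc_iff htree).1 hxM'
      have hdM : ∀ v ∈ ((thePath htree r x).dropUntil a₁ hxs).support, Anc T r a₁ v := by
        intro v hv
        have hvx : Anc T r v x := (anc_iff htree).2 (support_dropUntil_subset _ hxs hv)
        rcases anc_comparable htree hvx hxM' with h1 | h1
        · by_cases hva : v = a₁
          · rw [hva]; exact anc_refl htree r a₁
          · exfalso
            have hvP : v ∈ (thePath htree r a₁).support := (anc_iff htree).1 h1
            rw [← takeUntil_eq htree hxs] at hvP
            have hnd := (thePath_isPath htree r x).support_nodup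
            rw [← take_spec (thePath htree r x) hxs, support_append,
              List.nodup_append] at hnd
            refine hnd.2.2 v hvP v ?_ rfl
            have hv2 : v ∈ ((thePath htree r x).dropUntil a₁ hxs).support := hv
            rw [support_eq_cons ((thePath htree r x).dropUntil a₁ hxs),
              List.mem_cons] at hv2
            rcases hv2 with h2 | h2; exacts [absurd h2 hva, h2]
        · exact h1
      have hxBA' : x ∈ B \ A := by
        obtain ⟨q, hq⟩ := walkLe hle ((thePath htree r x).dropUntil a₁ hxs)
        refine walk_side (sep_symm hsepAB) (by rw [Set.inter_comm]; exact hAB)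
          q ha₁BA ?_
        intro v hv
        rw [hq] at hv
        have hva₁ : Anc T r a₁ v := hdM v hv
        constructor
        · intro he; subst he
          exact ha₁c.1.ne (anc_antisymm htree ha₁c.2 hva₁)
        · intro he; subst he
          exact hbx ((anc_iff htree).2 (support_dropUntil_subset _ hxs hv))
      exact hxBA hxBA'
  -- child c of γ towards b
  obtain ⟨c, hcc, hcb⟩ := exists_child htree hPγb
  have hyLc : y ∈ Lset G T r c := by
    refine ⟨⟨anc_trans htree (anc_trans htree hyPa.1 hPaγ.1) hcc.2, ?_⟩,
      x, anc_trans htree hcb hbx, hGadj.symm⟩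
    intro he
    have h1 := numlt hyPa
    have h2 := numle (anc_trans htree hPaγ.1 hcc.2)
    rw [he] at h1; omega
  have hnum_ua : num (lwpt1 ℓ') < num a := by
    have hya_num := numlt hyPa
    by_cases hcl : c = ℓ'
    · subst hcl
      have := numle (hmin y hyLc)
      omega
    · have hcl' : num c < num ℓ' := lt_of_le_of_ne (hl.2 c hcc) (fun he => hcl (hinj he))
      have h1c := hlw1s c
      rcases h1c with ⟨hucL, h0c⟩ | ⟨hltc, -⟩
      swap
      · exfalso
        have h00 : (Lset G T r c).ncard = 0 := by omega
        rw [Set.ncard_eq_zero (Set.toFinite _)] at h00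
        rw [h00] at hyLc; exact hyLc
      have h0c' : {w ∈ Lset G T r c | PAnc T r w (lwpt1 c)} = ∅ := by
        rw [← Set.ncard_eq_zero (Set.toFinite _)]
        simpa using h0c
      have hminc : Anc T r (lwpt1 c) y := by
        rcases anc_comparable htree hucL.1.1 hyLc.1.1 with h | h
        · exact h
        · by_cases hey : y = lwpt1 c
          · rw [hey]; exact anc_refl htree r _
          · have : y ∈ {w ∈ Lset G T r c | PAnc T r w (lwpt1 c)} := ⟨hyLc, h, hey⟩
            rw [h0c'] at this; exact this.elim
      have h5 := hcond5 γ c ℓ' hcc hl.1 hcl'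
      have hminc_num : num (lwpt1 c) ≤ num y := numle hminc
      rcases h5 with h5 | ⟨h5, -⟩
      · omega
      · rw [← h5]; omega
  have hPua : PAnc T r (lwpt1 ℓ') a := by
    rcases anc_comparable htree huL.1.1 hPaℓ.1 with h | h
    · refine ⟨h, fun he => ?_⟩
      rw [he] at hnum_ua; exact lt_irrefl _ hnum_ua
    · exfalso; have := numle h; omega
  -- the new separation
  have hℓD : ℓ' ∈ Desc T r ℓ' := anc_refl htree r ℓ'
  have huD : lwpt1 ℓ' ∉ Desc T r ℓ' := fun h => huL.1.2 (anc_antisymm htree huL.1.1 h)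
  have hγD : γ ∉ Desc T r ℓ' := fun h => hPγℓ.2 (anc_antisymm htree hPγℓ.1 h)
  have haD : a ∉ Desc T r ℓ' := fun h => hPaℓ.2 (anc_antisymm htree hPaℓ.1 h)
  have hrD : r ∉ Desc T r ℓ' := by
    intro h
    have h1 : ℓ' = r := anc_root htree h
    rw [h1] at hchild
    have h2 : γ = r := anc_root htree hchild.2
    rw [h2] at hγBA; exact hγBA.2 hr.1
  have hnum_uγ : num (lwpt1 ℓ') < num γ := numlt hPuγ
  have hnum_aγ : num a < num γ := numlt hPaγ
  have hℓu : ℓ' ≠ lwpt1 ℓ' := by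
    intro he
    have h2 := numlt hPγℓ
    have h3 := hnum_uγ
    rw [← he] at h3; omega
  have hinter : (Desc T r ℓ' ∪ {lwpt1 ℓ', γ}) ∩ ((Desc T r ℓ')ᶜ ∪ {lwpt1 ℓ', γ})
      = {lwpt1 ℓ', γ} := by
    ext z
    constructor
    · rintro ⟨h1 | h1, h2 | h2⟩
      · exact absurd h1 h2
      · exact h2
      · exact h1
      · exact h1
    · intro h; exact ⟨Or.inr h, Or.inr h⟩
  have hsep' : IsSeparation G (Desc T r ℓ' ∪ {lwpt1 ℓ', γ})
      ((Desc T r ℓ')ᶜ ∪ {lwpt1 ℓ', γ}) := by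
    refine ⟨?_, ⟨ℓ', ?_⟩, ⟨a, ?_⟩, ?_⟩
    · apply Set.eq_univ_of_forall; intro z
      by_cases hz : z ∈ Desc T r ℓ'
      · exact Or.inl (Or.inl hz)
      · exact Or.inr (Or.inl hz)
    · refine ⟨Or.inl hℓD, ?_⟩
      rintro (h | h)
      · exact h hℓD
      · rcases h with h | h
        · exact hℓu h
        · exact hPγℓ.2 h.symm
    · refine ⟨Or.inl haD, ?_⟩
      rintro (h | h)
      · exact haD h
      · rcases h with h | h
        · rw [h] at hnum_ua; exact lt_irrefl _ hnum_ua
        · rw [h] at hnum_aγ; exact lt_irrefl _ hnum_aγ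
    · intro x₂ hx₂ y₂ hy₂ hadj₂
      have hx₂D : x₂ ∈ Desc T r ℓ' := by
        rcases hx₂.1 with h | h
        · exact h
        · exact absurd (Or.inr h) hx₂.2
      have hy₂D : y₂ ∉ Desc T r ℓ' := fun h => hy₂.2 (Or.inl h)
      have hy₂uγ : y₂ ∉ ({lwpt1 ℓ', γ} : Set V) := fun h => hy₂.2 (Or.inr h)
      rcases hnorm x₂ y₂ hadj₂ with h | h
      · exact hy₂D (anc_trans htree hx₂D h)
      · rcases anc_comparable htree h hx₂D with h1 | h1
        · have hne : y₂ ≠ ℓ' := fun he => hy₂D (he ▸ hℓD)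
          have hyL : y₂ ∈ Lset G T r ℓ' := ⟨⟨h1, hne⟩, x₂, hx₂D, hadj₂.symm⟩
          rw [hLset] at hyL
          exact hy₂uγ hyL
        · exact hy₂D h1
  have hnotT2 : ¬ IsType2Sep G T r (Desc T r ℓ' ∪ {lwpt1 ℓ', γ})
      ((Desc T r ℓ')ᶜ ∪ {lwpt1 ℓ', γ}) := by
    rintro ⟨-, a₀, b₀, hab₀, -, -, ⟨z, hz⟩, hsides⟩
    rw [hinter] at hab₀
    have ha₀ : (a₀ = lwpt1 ℓ' ∧ b₀ = γ) ∨ (a₀ = γ ∧ b₀ = lwpt1 ℓ') := by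
      have h1 : a₀ ∈ ({lwpt1 ℓ', γ} : Set V) := by rw [hab₀]; exact Or.inl rfl
      have h2 : b₀ ∈ ({lwpt1 ℓ', γ} : Set V) := by rw [hab₀]; exact Or.inr rfl
      rcases h1 with h1 | h1 <;> rcases h2 with h2 | h2
      · exfalso
        have h3 : γ ∈ ({a₀, b₀} : Set V) := by rw [← hab₀]; exact Or.inr rfl
        rcases h3 with h3 | h3
        · exact huγ (h3.trans h1).symm
        · exact huγ (h3.trans h2).symm
      · exact Or.inl ⟨h1, h2⟩
      · exact Or.inr ⟨h1, h2⟩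
      · exfalso
        have h3 : lwpt1 ℓ' ∈ ({a₀, b₀} : Set V) := by rw [← hab₀]; exact Or.inl rfl
        rcases h3 with h3 | h3
        · exact huγ (h3.trans h1)
        · exact huγ (h3.trans h2)
    rcases ha₀ with ⟨he1, he2⟩ | ⟨he1, he2⟩
    · rcases hsides with ⟨hrs, -⟩ | ⟨-, hsub⟩
      · rcases hrs.1 with h | h
        · exact hrD h
        · exact hrs.2 (Or.inr h)
      · have haT : a ∈ Topen T r a₀ b₀ := by
          rw [he1, he2]; exact ⟨hPua, hPaγ⟩
        have hm := hsub haT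
        rcases hm.1 with h | h
        · exact haD h
        · exact hm.2 (Or.inr h)
    · rw [he1] at hz
      rw [he2] at hz
      have h1 : Anc T r γ (lwpt1 ℓ') := anc_trans htree hz.1.1 hz.2.1
      exact hPuγ.2 (anc_antisymm htree hPuγ.1 h1)
  refine ⟨Desc T r ℓ' ∪ {lwpt1 ℓ', γ}, (Desc T r ℓ')ᶜ ∪ {lwpt1 ℓ', γ},
    ⟨⟨hsep', by rw [hinter]; exact Set.ncard_pair huγ⟩, hnotT2⟩, hinter, hPua, ?_⟩
  intro hN
  rcases hN with ⟨-, h⟩ | ⟨-, h⟩ | ⟨-, h⟩ | ⟨h, -⟩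
  · exact hr.2 (h (Or.inl hrD))
  · have huA : lwpt1 ℓ' ∈ A \ B := hyAB _ hPua
    exact huA.2 (h (Or.inr (Or.inl rfl)))
  · exact hγBA.2 (h (Or.inr (Or.inr rfl)))
  · have hℓB : ℓ' ∈ B := by
      by_cases hℓb : ℓ' = b
      · have hb : b ∈ A ∩ B := by rw [hAB]; exact Or.inr rfl
        exact hℓb ▸ hb.2
      · have hℓU : ℓ' ∈ A ∪ B := by rw [hsepAB.1]; trivial
        rcases hℓU with h1 | h1
        · by_cases h2 : ℓ' ∈ B
          · exact h2
          · exact absurd (hle hchild.1).symm (hsepAB.2.2.2 ℓ' ⟨h1, h2⟩ γ hγBA)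
        · exact h1
    have hm := h hℓB
    rcases hm with h1 | h1
    · exact h1 hℓD
    · rcases h1 with h1 | h1
      · exact hℓu h1
      · exact hPγℓ.2 h1.symm

/-- If `(A,B)` is a half-connected type-2 separation with separator `{a,b}` and some
vertex `γ` of the open tree path `T(a,b)` has a left child `ℓ'` with `lwpt₂ ℓ' = γ`,
then there is a type-1 separation with separator `{lwpt ℓ', γ}`, where `lwpt ℓ'` is a
proper ancestor of `a`, crossing `(A,B)`. -/
theorem type2_crossed_by_type1 [Fintype V] (G T : SimpleGraph V) (r : V)
    (num : V → ℕ) (lwpt1 lwpt2 : V → V)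
    (hG : TwoConnected G) (hT : IsNormalSpanningTree G T r)
    (hnum : CompatibleNumbering G T r num lwpt1 lwpt2)
    (A B : Set V) (a b : V)
    (hsep : IsType2Sep G T r A B) (hhc : HalfConnected G A B)
    (hAB : A ∩ B = {a, b}) (hab : num a < num b)
    (γ ℓ' : V) (hγ : γ ∈ Topen T r a b)
    (hl : IsLeftChild T r num γ ℓ') (hlw2 : lwpt2 ℓ' = γ) :
    ∃ A' B' : Set V, IsType1Sep G T r A' B' ∧ A' ∩ B' = {lwpt1 ℓ', γ} ∧
      PAnc T r (lwpt1 ℓ') a ∧ ¬ Nested A B A' B' := by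
  classical
  obtain ⟨hsep2, a₀, b₀, hab₀, hra₀, hrb₀, hne, hsides⟩ := hsep
  have htree := hT.1
  have numle : ∀ {u v : V}, Anc T r u v → num u ≤ num v := by
    intro u v h
    have h1 : num v ∈ num '' Desc T r u := ⟨v, h, rfl⟩
    rw [hnum.2.1 u] at h1
    exact h1.1
  obtain ⟨z, hz⟩ := hne
  have hP : PAnc T r a₀ b₀ := by
    refine ⟨anc_trans htree hz.1.1 hz.2.1, ?_⟩
    intro he
    rw [← he] at hz
    exact hz.1.2 (anc_antisymm htree hz.2.1 hz.1.1).symm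
  have hset : ({a₀, b₀} : Set V) = {a, b} := by rw [← hab₀, hAB]
  have hid : a₀ = a ∧ b₀ = b := by
    have h1 : a₀ ∈ ({a, b} : Set V) := by rw [← hset]; exact Or.inl rfl
    have h2 : b₀ ∈ ({a, b} : Set V) := by rw [← hset]; exact Or.inr rfl
    rcases h1 with h1 | h1 <;> rcases h2 with h2 | h2
    · exact absurd (h1.trans h2.symm) hP.2
    · exact ⟨h1, h2⟩
    · exfalso
      have h1' : a₀ = b := h1
      have h2' : b₀ = a := h2
      have h3 := numle hP.1
      rw [h1', h2'] at h3
      omega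
    · exfalso
      have h1' : a₀ = b := h1
      have h2' : b₀ = b := h2
      have h3 : a ∈ ({a₀, b₀} : Set V) := by rw [hset]; exact Or.inl rfl
      have h4 : a = b := by
        rcases h3 with h3 | h3
        · exact h3.trans h1'
        · exact h3.trans h2'
      rw [h4] at hab; exact lt_irrefl _ hab
  obtain ⟨he1, he2⟩ := hid
  rw [he1] at hra₀
  rw [he1, he2] at hsides
  rcases hsides with ⟨h1, h2⟩ | ⟨h1, h2⟩
  · exact core_lemma G T r num lwpt1 lwpt2 hG hT hnum A B a b hsep2.1 hAB hab
      hra₀ h1 h2 γ ℓ' hγ hl hlw2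
  · obtain ⟨A', B', hh1, hh2, hh3, hh4⟩ :=
      core_lemma G T r num lwpt1 lwpt2 hG hT hnum B A a b (sep_symm hsep2.1)
        (by rw [Set.inter_comm]; exact hAB) hab hra₀ h1 h2 γ ℓ' hγ hl hlw2
    exact ⟨A', B', hh1, hh2, hh3, fun hN => hh4 (nested_swap hN)⟩
end
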